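/- arXiv:2203.00987 — 5 statements merged into one kernel-verified Lean document; each statement's English description precedes it below -/
import Mathlib

section
/- Strong duality holds for the Lasso: if x* ∈ ℝ^n minimizes P over ℝ^n, then the vector u* = y − A x* belongs to Δ, maximizes D over Δ, and satisfies P(x*) = D(u*). -/
/-- Euclidean norm of a vector in ℝ^m. -/
noncomputable def norm2 {m : ℕ} (v : Fin m → ℝ) : ℝ := Real.sqrt (∑ i, v i ^ 2)

/-- ℓ1 norm of a vector in ℝ^n. -/
def norm1 {n : ℕ} (x : Fin n → ℝ) : ℝ := ∑ i, |x i|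

/-- Canonical inner product on ℝ^m. -/
def dot {m : ℕ} (a u : Fin m → ℝ) : ℝ := ∑ i, a i * u i

/-- Lasso primal objective P(x) = (1/2)‖y − Ax‖₂² + λ‖x‖₁. -/
noncomputable def Pobj {m n : ℕ} (A : Matrix (Fin m) (Fin n) ℝ) (y : Fin m → ℝ)
    (lam : ℝ) (x : Fin n → ℝ) : ℝ :=
  (1 / 2) * norm2 (y - A.mulVec x) ^ 2 + lam * norm1 x

/-- Lasso dual objective D(u) = (1/2)‖y‖₂² − (1/2)‖y − u‖₂². -/
noncomputable def Dobj {m : ℕ} (y u : Fin m → ℝ) : ℝ :=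
  (1 / 2) * norm2 y ^ 2 - (1 / 2) * norm2 (y - u) ^ 2

/-- Dual feasibility: u ∈ Δ iff |⟨a_i, u⟩| ≤ λ for every column a_i of A. -/
def feas {m n : ℕ} (A : Matrix (Fin m) (Fin n) ℝ) (lam : ℝ) (u : Fin m → ℝ) : Prop :=
  ∀ i : Fin n, |dot (fun j => A j i) u| ≤ lam

lemma norm2_sq {m : ℕ} (v : Fin m → ℝ) : norm2 v ^ 2 = dot v v := by
  unfold norm2 dot
  rw [Real.sq_sqrt (by positivity)]
  simp [sq]

lemma dot_self_nonneg {m : ℕ} (v : Fin m → ℝ) : 0 ≤ dot v v := by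
  unfold dot
  apply Finset.sum_nonneg
  intro i _
  exact mul_self_nonneg _

lemma dot_expand {m : ℕ} (w z : Fin m → ℝ) (t : ℝ) :
    dot (w - t • z) (w - t • z) = dot w w - 2 * t * dot z w + t ^ 2 * dot z z := by
  unfold dot
  rw [Finset.mul_sum, Finset.mul_sum, ← Finset.sum_sub_distrib, ← Finset.sum_add_distrib]
  apply Finset.sum_congr rfl
  intro i _
  simp only [Pi.sub_apply, Pi.smul_apply, smul_eq_mul]
  ring

lemma dot_sub_right {m : ℕ} (a u w : Fin m → ℝ) :
    dot a (u - w) = dot a u - dot a w := by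
  unfold dot
  rw [← Finset.sum_sub_distrib]
  apply Finset.sum_congr rfl
  intro i _
  simp only [Pi.sub_apply]; ring

lemma dot_mulVec {m n : ℕ} (A : Matrix (Fin m) (Fin n) ℝ) (x : Fin n → ℝ) (u : Fin m → ℝ) :
    dot (A.mulVec x) u = ∑ i, x i * dot (fun j => A j i) u := by
  have h : ∀ j, A.mulVec x j = ∑ i, A j i * x i := fun j => rfl
  unfold dot
  calc ∑ j, A.mulVec x j * u j = ∑ j, (∑ i, A j i * x i) * u j := by
        apply Finset.sum_congr rfl; intro j _; rw [h]
    _ = ∑ j, ∑ i, A j i * x i * u j := by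
        apply Finset.sum_congr rfl; intro j _; rw [Finset.sum_mul]
    _ = ∑ i, ∑ j, A j i * x i * u j := Finset.sum_comm
    _ = ∑ i, x i * ∑ j, A j i * u j := by
        apply Finset.sum_congr rfl; intro i _; rw [Finset.mul_sum]
        apply Finset.sum_congr rfl; intro j _; ring

/-- A small real analysis helper: if `L ≤ s * B` for all small positive `s`, with `B ≥ 0`,
then `L ≤ 0`. -/
lemma aux_le_zero (L B : ℝ) (hB : 0 ≤ B) (h : ∀ s : ℝ, 0 < s → s < 1 → L ≤ s * B) :
    L ≤ 0 := by
  by_contra hL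
  push_neg at hL
  rcases eq_or_lt_of_le hB with hB0 | hB0
  · have := h (1/2) (by norm_num) (by norm_num)
    rw [← hB0] at this
    linarith
  · have hs1 : (0:ℝ) < min (1/2) (L / (2 * B)) := by
      apply lt_min (by norm_num)
      positivity
    have hs2 : min (1/2) (L / (2 * B)) < 1 := lt_of_le_of_lt (min_le_left _ _) (by norm_num)
    have h2 := h _ hs1 hs2
    have h3 : min (1/2) (L / (2 * B)) * B ≤ (L / (2 * B)) * B :=
      mul_le_mul_of_nonneg_right (min_le_right _ _) hB
    have h4 : (L / (2 * B)) * B = L / 2 := by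
      field_simp
    linarith

/-- Strong duality: if x* minimizes P, then u* = y − A x* is dual feasible,
maximizes D over Δ, and P(x*) = D(u*). -/
theorem lasso_strong_duality (m n : ℕ) (hm : 0 < m) (hn : 0 < n)
    (A : Matrix (Fin m) (Fin n) ℝ) (y : Fin m → ℝ) (lam : ℝ) (hlam : 0 < lam)
    (xstar : Fin n → ℝ) (hx : ∀ x : Fin n → ℝ, Pobj A y lam xstar ≤ Pobj A y lam x) :
    feas A lam (y - A.mulVec xstar) ∧
      (∀ u : Fin m → ℝ, feas A lam u → Dobj y u ≤ Dobj y (y - A.mulVec xstar)) ∧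
      Pobj A y lam xstar = Dobj y (y - A.mulVec xstar) := by
  set v := A.mulVec xstar with hv
  set r := y - v with hr
  have hP : ∀ x : Fin n → ℝ, Pobj A y lam x
      = (1/2) * dot (y - A.mulVec x) (y - A.mulVec x) + lam * norm1 x := by
    intro x
    rw [Pobj, norm2_sq]
  -- Feasibility
  have hfeas : feas A lam r := by
    intro i
    set c := dot (fun j => A j i) r with hc
    set K := dot (fun j => A j i) (fun j => A j i) with hK
    have hKnn : 0 ≤ K := dot_self_nonneg _
    -- key inequality: for all t, t * c ≤ t^2/2 * K + lam * |t|
    have key : ∀ t : ℝ, t * c ≤ t ^ 2 / 2 * K + lam * |t| := by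
      intro t
      have h1 := hx (xstar + t • (Pi.single i 1 : Fin n → ℝ))
      rw [hP, hP] at h1
      have hmv : A.mulVec (xstar + t • (Pi.single i 1 : Fin n → ℝ)) = v + t • (fun j => A j i) := by
        rw [Matrix.mulVec_add, Matrix.mulVec_smul, Matrix.mulVec_single]
        simp [hv]
        rfl
      rw [hmv] at h1
      have he : y - (v + t • (fun j => A j i)) = r - t • (fun j => A j i) := by
        rw [hr]; abel
      rw [he, dot_expand] at h1
      -- norm1 part
      have hn1 : norm1 (xstar + t • (Pi.single i 1 : Fin n → ℝ)) ≤ norm1 xstar + |t| := by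
        unfold norm1
        have : ∀ j : Fin n, |(xstar + t • (Pi.single i 1 : Fin n → ℝ)) j| ≤ |xstar j| + |t| * |(Pi.single i 1 : Fin n → ℝ) j| := by
          intro j
          simp only [Pi.add_apply, Pi.smul_apply, smul_eq_mul]
          calc |xstar j + t * (Pi.single i 1 : Fin n → ℝ) j| ≤ |xstar j| + |t * (Pi.single i 1 : Fin n → ℝ) j| := abs_add_le _ _
            _ = |xstar j| + |t| * |(Pi.single i 1 : Fin n → ℝ) j| := by rw [abs_mul]
        calc ∑ j, |(xstar + t • (Pi.single i 1 : Fin n → ℝ)) j|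
            ≤ ∑ j, (|xstar j| + |t| * |(Pi.single i 1 : Fin n → ℝ) j|) :=
              Finset.sum_le_sum (fun j _ => this j)
          _ = ∑ j, |xstar j| + |t| * ∑ j, |(Pi.single i 1 : Fin n → ℝ) j| := by
              rw [Finset.sum_add_distrib, Finset.mul_sum]
          _ = ∑ j, |xstar j| + |t| := by
              have hsum : ∑ j, |(Pi.single i 1 : Fin n → ℝ) j| = 1 := by
                rw [Finset.sum_eq_single i]
                · simp
                · intro b _ hb; simp [Pi.single_eq_of_ne hb]
                · intro hi; exact absurd (Finset.mem_univ i) hi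
              rw [hsum, mul_one]
      rw [← hc, ← hK] at h1
      nlinarith [h1, mul_le_mul_of_nonneg_left hn1 (le_of_lt hlam)]
    rw [abs_le]
    constructor
    · have := aux_le_zero (-c - lam) (K/2) (by linarith) (by
        intro s hs0 hs1
        have := key (-s)
        rw [abs_neg, abs_of_pos hs0] at this
        nlinarith)
      linarith
    · have := aux_le_zero (c - lam) (K/2) (by linarith) (by
        intro s hs0 hs1
        have := key s
        rw [abs_of_pos hs0] at this
        nlinarith)
      linarith
  -- Complementary slackness: dot v r = lam * norm1 xstar
  have hcs : dot v r = lam * norm1 xstar := by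
    set c := lam * norm1 xstar - dot v r with hcdef
    set K := dot v v with hK
    have hKnn : 0 ≤ K := dot_self_nonneg _
    have key : ∀ t : ℝ, |t| < 1 → 0 ≤ t * c + t ^ 2 / 2 * K := by
      intro t ht
      have h1 := hx ((1 + t) • xstar)
      rw [hP, hP] at h1
      have hmv : A.mulVec ((1 + t) • xstar) = (1 + t) • v := Matrix.mulVec_smul A _ _
      rw [hmv] at h1
      have he : y - (1 + t) • v = r - t • v := by
        rw [hr]
        ext j
        simp only [Pi.sub_apply, Pi.smul_apply, smul_eq_mul]
        ring
      rw [he, dot_expand] at h1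
      have hn1 : norm1 ((1 + t) • xstar) = (1 + t) * norm1 xstar := by
        unfold norm1
        rw [Finset.mul_sum]
        apply Finset.sum_congr rfl
        intro j _
        simp only [Pi.smul_apply, smul_eq_mul, abs_mul]
        rw [abs_of_pos (by cases abs_lt.mp ht; linarith)]
      rw [hn1, ← hK] at h1
      have hvr : dot v r = lam * norm1 xstar - c := by rw [hcdef]; ring
      nlinarith [h1]
    have h1 : c ≤ 0 := by
      apply aux_le_zero c (K/2) (by linarith)
      intro s hs0 hs1
      have := key (-s) (by rw [abs_neg, abs_of_pos hs0]; exact hs1)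
      nlinarith
    have h2 : -c ≤ 0 := by
      apply aux_le_zero (-c) (K/2) (by linarith)
      intro s hs0 hs1
      have := key s (by rw [abs_of_pos hs0]; exact hs1)
      nlinarith
    have : c = 0 := le_antisymm h1 (by linarith)
    rw [hcdef] at this
    linarith
  -- Express P(x*) and the equality P(x*) = D(r)
  have hyeq : dot y y = dot r r + 2 * dot v r + dot v v := by
    have : r = y - (1:ℝ) • v := by rw [hr]; simp
    have h := dot_expand y v 1
    have h2 : y - (1:ℝ) • v = r := by rw [hr]; simp
    rw [h2] at h
    have hsym : dot v y = dot v r + dot v v := by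
      have : y = r + v := by rw [hr]; abel
      rw [this]
      unfold dot
      rw [← Finset.sum_add_distrib]
      apply Finset.sum_congr rfl
      intro j _
      simp only [Pi.add_apply]; ring
    rw [hsym] at h
    -- h : dot r r = dot y y - 2*1*(dot v r + dot v v) + 1^2 * dot v v
    nlinarith [h]
  have hDr : Dobj y r = (1/2) * dot r r + dot v r := by
    unfold Dobj
    rw [norm2_sq, norm2_sq]
    have : y - r = v := by rw [hr]; abel
    rw [this]
    linarith [hyeq]
  have hPeq : Pobj A y lam xstar = Dobj y r := by
    rw [hP, hDr, ← hv, ← hr, hcs]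
    try ring
  refine ⟨hfeas, ?_, hPeq⟩
  -- weak duality: for feasible u, D(u) ≤ P(x*) = D(r)
  intro u hu
  rw [← hPeq, hP, ← hv, ← hr]
  -- D(u) = dot y u - 1/2 dot u u ... show P - D ≥ 0
  have hD : Dobj y u = (1/2) * dot y y - (1/2) * dot (y - u) (y - u) := by
    unfold Dobj
    rw [norm2_sq, norm2_sq]
  have hyu : dot (y - u) (y - u) = dot y y - 2 * dot u y + dot u u := by
    have h := dot_expand y u 1
    simpa using h
  have hru : dot (r - u) (r - u) = dot r r - 2 * dot u r + dot u u := by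
    have h := dot_expand r u 1
    simpa using h
  have hrnn : 0 ≤ dot (r - u) (r - u) := dot_self_nonneg _
  have huy : dot u y = dot u r + dot u v := by
    have : y = r + v := by rw [hr]; abel
    rw [this]
    unfold dot
    rw [← Finset.sum_add_distrib]
    apply Finset.sum_congr rfl
    intro j _
    simp only [Pi.add_apply]; ring
  have hvu : dot u v ≤ lam * norm1 xstar := by
    have hsym : dot u v = dot v u := by
      unfold dot
      apply Finset.sum_congr rfl
      intro j _; ring
    rw [hsym, hv, dot_mulVec, norm1, Finset.mul_sum]
    apply Finset.sum_le_sum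
    intro i _
    calc xstar i * dot (fun j => A j i) u ≤ |xstar i * dot (fun j => A j i) u| := le_abs_self _
      _ = |xstar i| * |dot (fun j => A j i) u| := abs_mul _ _
      _ ≤ |xstar i| * lam := mul_le_mul_of_nonneg_left (hu i) (abs_nonneg _)
      _ = lam * |xstar i| := mul_comm _ _
  rw [hD]
  nlinarith [hyu, hru, hrnn, huy, hvu]
end

section
/- Canonical characterization of dual cutting half-spaces (Lemma 1): 𝒢 = {(A x, δ) : x ∈ ℝ^n, δ ≥ λ‖x‖₁}. In particular, if g ∈ ℝ^m and δ ∈ ℝ satisfy ⟨g, u⟩ ≤ δ for all u ∈ Δ, then there exists x ∈ ℝ^n with g = A x and δ ≥ λ‖x‖₁. -/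
lemma dot_smul_right {m : ℕ} (a u : Fin m → ℝ) (r : ℝ) :
    dot a (r • u) = r * dot a u := by
  simp only [dot, Pi.smul_apply, smul_eq_mul, Finset.mul_sum]
  exact Finset.sum_congr rfl fun i _ => by ring

lemma dot_comm {m : ℕ} (a u : Fin m → ℝ) : dot a u = dot u a := by
  simp [dot, mul_comm]

/-- Representation of a continuous linear functional on ℝ^m by a vector. -/
lemma clm_repr {m : ℕ} (f : (Fin m → ℝ) →L[ℝ] ℝ) (v : Fin m → ℝ) :
    f v = dot (fun j => f (Pi.single j 1)) v := by
  have hv : v = ∑ j, v j • (Pi.single j (1 : ℝ) : Fin m → ℝ) := by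
    ext k
    rw [Finset.sum_apply]
    simp [Pi.single_apply, mul_ite]
  conv_lhs => rw [hv]
  rw [map_sum]
  simp [dot, mul_comm]

lemma norm1_nonneg {n : ℕ} (x : Fin n → ℝ) : 0 ≤ norm1 x :=
  Finset.sum_nonneg fun i _ => abs_nonneg _

/-- The key claim: a cutting half-space comes from some x. -/
lemma key_claim {m n : ℕ} (A : Matrix (Fin m) (Fin n) ℝ) (lam : ℝ) (hlam : 0 < lam)
    (g : Fin m → ℝ) (δ : ℝ) (h : ∀ u : Fin m → ℝ, feas A lam u → dot g u ≤ δ) :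
    ∃ x : Fin n → ℝ, g = A.mulVec x ∧ lam * norm1 x ≤ δ := by
  have hfeas0 : feas A lam 0 := by
    intro i; simp [dot, hlam.le]
  have hδ0 : 0 ≤ δ := by
    have := h 0 hfeas0
    simpa [dot] using this
  rcases eq_or_lt_of_le hδ0 with hδ | hδ
  · -- δ = 0: then g = 0
    have hg : g = 0 := by
      by_contra hg
      set M : ℝ := 1 + ∑ i, |dot (fun j => A j i) g| with hM
      have hMpos : 0 < M := by
        have : 0 ≤ ∑ i, |dot (fun j => A j i) g| :=
          Finset.sum_nonneg fun i _ => abs_nonneg _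
        linarith
      set ε : ℝ := lam / M with hε
      have hεpos : 0 < ε := div_pos hlam hMpos
      have hfeas : feas A lam (ε • g) := by
        intro i
        rw [dot_smul_right, abs_mul, abs_of_pos hεpos]
        have h1 : |dot (fun j => A j i) g| ≤ M := by
          have : |dot (fun j => A j i) g| ≤ ∑ k, |dot (fun j => A j k) g| :=
            Finset.single_le_sum (f := fun k => |dot (fun j => A j k) g|)
              (fun k _ => abs_nonneg _) (Finset.mem_univ i)
          linarith
        calc ε * |dot (fun j => A j i) g| ≤ ε * M := by
              exact mul_le_mul_of_nonneg_left h1 hεpos.le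
          _ = lam := by rw [hε]; field_simp
      have := h (ε • g) hfeas
      rw [dot_smul_right, ← hδ] at this
      have hgg : dot g g ≤ 0 := by
        nlinarith
      have hsum : ∑ j, g j * g j ≤ 0 := hgg
      have : ∀ j, g j = 0 := by
        intro j
        have hterm : ∀ k ∈ Finset.univ, (0:ℝ) ≤ g k * g k := fun k _ => mul_self_nonneg _
        have := (Finset.sum_eq_zero_iff_of_nonneg hterm).1
          (le_antisymm hsum (Finset.sum_nonneg hterm)) j (Finset.mem_univ j)
        nlinarith [this]
      exact hg (funext this)
    exact ⟨0, by simp [hg], by simp [norm1, ← hδ]⟩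
  · -- δ > 0
    set t : ℝ := δ / lam with ht
    have htpos : 0 < t := div_pos hδ hlam
    set S : Set (Fin n → ℝ) := {x | norm1 x ≤ t} with hS
    have hSconv : Convex ℝ S := by
      intro x hx y hy a b ha hb hab
      simp only [hS, Set.mem_setOf_eq, norm1] at *
      calc ∑ i, |(a • x + b • y) i| ≤ ∑ i, (a * |x i| + b * |y i|) := by
            apply Finset.sum_le_sum
            intro i _
            simp only [Pi.add_apply, Pi.smul_apply, smul_eq_mul]
            calc |a * x i + b * y i| ≤ |a * x i| + |b * y i| := abs_add_le _ _
              _ = a * |x i| + b * |y i| := by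
                  rw [abs_mul, abs_mul, abs_of_nonneg ha, abs_of_nonneg hb]
        _ = a * (∑ i, |x i|) + b * (∑ i, |y i|) := by
            rw [Finset.sum_add_distrib, Finset.mul_sum, Finset.mul_sum]
        _ ≤ a * t + b * t := by
            apply add_le_add
            · exact mul_le_mul_of_nonneg_left hx ha
            · exact mul_le_mul_of_nonneg_left hy hb
        _ = t := by rw [← add_mul, hab, one_mul]
    have hnorm1cont : Continuous (norm1 : (Fin n → ℝ) → ℝ) := by
      unfold norm1
      exact continuous_finset_sum _ fun i _ => (continuous_apply i).abs
    have hSclosed : IsClosed S := IsClosed.preimage hnorm1cont isClosed_Iic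
    have hSbdd : Bornology.IsBounded S := by
      apply (Metric.isBounded_closedBall (x := (0 : Fin n → ℝ)) (r := t)).subset
      intro x hx
      simp only [Metric.mem_closedBall, dist_zero_right]
      rw [pi_norm_le_iff_of_nonneg htpos.le]
      intro i
      have h1 : |x i| ≤ norm1 x :=
        Finset.single_le_sum (f := fun k => |x k|) (fun k _ => abs_nonneg _)
          (Finset.mem_univ i)
      simpa [Real.norm_eq_abs] using h1.trans hx
    have hScomp : IsCompact S := Metric.isCompact_of_isClosed_isBounded hSclosed hSbdd
    have hmvcont : Continuous (A.mulVec : (Fin n → ℝ) → (Fin m → ℝ)) := by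
      have : (A.mulVec : (Fin n → ℝ) → (Fin m → ℝ)) = A.mulVecLin := rfl
      rw [this]
      exact A.mulVecLin.continuous_of_finiteDimensional
    set B : Set (Fin m → ℝ) := A.mulVec '' S with hB
    have hBcomp : IsCompact B := hScomp.image hmvcont
    have hBconv : Convex ℝ B := by
      apply Convex.is_linear_image hSconv
      exact A.mulVecLin.isLinear
    by_contra hcon
    push_neg at hcon
    have hgB : g ∉ B := by
      rintro ⟨x, hx, rfl⟩
      refine absurd ?_ (not_le.2 (hcon x rfl))
      calc lam * norm1 x ≤ lam * t := mul_le_mul_of_nonneg_left hx hlam.le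
        _ = δ := by rw [ht]; field_simp
    obtain ⟨f, c, hfB, hfg⟩ := geometric_hahn_banach_closed_point hBconv hBcomp.isClosed hgB
    set u : Fin m → ℝ := fun j => f (Pi.single j 1) with hu
    have hfu : ∀ v, f v = dot u v := fun v => clm_repr f v
    have hc0 : 0 < c := by
      have h0B : (0 : Fin m → ℝ) ∈ B :=
        ⟨0, by simp [hS, norm1, htpos.le], by simp [Matrix.mulVec_zero]⟩
      have := hfB 0 h0B
      simpa using this
    -- column bounds
    have hcol : ∀ i, t * |dot (fun j => A j i) u| ≤ c := by
      intro i
      have hxy : ∀ s : ℝ, |s| = 1 →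
          t * (s * dot (fun j => A j i) u) < c := by
        intro s hs
        have hmem : ((t * s) • (Pi.single i (1:ℝ) : Fin n → ℝ)) ∈ S := by
          simp only [hS, Set.mem_setOf_eq, norm1]
          have h1 : ∀ j, |((t * s) • (Pi.single i (1:ℝ) : Fin n → ℝ)) j| =
              |t * s| * |(Pi.single i (1:ℝ) : Fin n → ℝ) j| := by
            intro j; simp [abs_mul]
          rw [Finset.sum_congr rfl fun j _ => h1 j]
          rw [← Finset.mul_sum]
          have h2 : ∑ j, |(Pi.single i (1:ℝ) : Fin n → ℝ) j| = 1 := by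
            simp [Pi.single_apply, apply_ite abs]
          rw [h2, mul_one, abs_mul, hs, mul_one, abs_of_pos htpos]
          done
        have hmemB : A.mulVec ((t * s) • (Pi.single i (1:ℝ) : Fin n → ℝ)) ∈ B :=
          ⟨_, hmem, rfl⟩
        have := hfB _ hmemB
        rw [hfu, Matrix.mulVec_smul, dot_smul_right, dot_comm] at this
        have heq : dot (A.mulVec (Pi.single i 1)) u = dot (fun j => A j i) u := by
          congr 1
          rw [Matrix.mulVec_single]
          ext j; simp
        rw [heq] at this
        nlinarith [this]
      rcases abs_cases (dot (fun j => A j i) u) with ⟨habs, _⟩ | ⟨habs, _⟩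
      · have := hxy 1 (by norm_num)
        rw [habs]; nlinarith
      · have := hxy (-1) (by norm_num)
        rw [habs]; nlinarith
    -- build the feasible point
    set w : Fin m → ℝ := (δ / c) • u with hw
    have hwfeas : feas A lam w := by
      intro i
      rw [hw, dot_smul_right, abs_mul, abs_of_pos (div_pos hδ hc0)]
      have h1 := hcol i
      have h2 : |dot (fun j => A j i) u| ≤ c / t := by
        rw [le_div_iff₀ htpos]; linarith [h1]
      calc δ / c * |dot (fun j => A j i) u| ≤ δ / c * (c / t) :=
            mul_le_mul_of_nonneg_left h2 (div_pos hδ hc0).le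
        _ = δ / t := by field_simp
        _ = lam := by rw [ht]; field_simp
    have hle := h w hwfeas
    rw [hw, dot_smul_right] at hle
    have hgu : c < dot g u := by
      have := hfg
      rw [hfu] at this
      rw [dot_comm] at this
      exact this
    have : δ / c * dot g u > δ / c * c :=
      mul_lt_mul_of_pos_left hgu (div_pos hδ hc0)
    rw [div_mul_cancel₀ _ hc0.ne'] at this
    linarith

/-- canonical characterization of the set 𝒢 of dual cutting half-spaces:
𝒢 = {(A x, δ) : x ∈ ℝ^n, δ ≥ λ‖x‖₁}; in particular any (g, δ) ∈ 𝒢 can be written this way. -/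
theorem dual_cutting_halfspaces_characterization (m n : ℕ) (hm : 0 < m) (hn : 0 < n)
    (A : Matrix (Fin m) (Fin n) ℝ) (lam : ℝ) (hlam : 0 < lam) :
    ({p : (Fin m → ℝ) × ℝ | ∀ u : Fin m → ℝ, feas A lam u → dot p.1 u ≤ p.2}
        = {p : (Fin m → ℝ) × ℝ | ∃ x : Fin n → ℝ, p.1 = A.mulVec x ∧ lam * norm1 x ≤ p.2}) ∧
    (∀ (g : Fin m → ℝ) (δ : ℝ), (∀ u : Fin m → ℝ, feas A lam u → dot g u ≤ δ) →
      ∃ x : Fin n → ℝ, g = A.mulVec x ∧ lam * norm1 x ≤ δ) := by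
  have easy : ∀ (x : Fin n → ℝ) (δ : ℝ), lam * norm1 x ≤ δ →
      ∀ u : Fin m → ℝ, feas A lam u → dot (A.mulVec x) u ≤ δ := by
    intro x δ hx u hu
    rw [dot_mulVec]
    calc ∑ i, x i * dot (fun j => A j i) u ≤ ∑ i, |x i| * lam := by
          apply Finset.sum_le_sum
          intro i _
          calc x i * dot (fun j => A j i) u ≤ |x i * dot (fun j => A j i) u| := le_abs_self _
            _ = |x i| * |dot (fun j => A j i) u| := abs_mul _ _
            _ ≤ |x i| * lam := mul_le_mul_of_nonneg_left (hu i) (abs_nonneg _)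
      _ = lam * norm1 x := by
          rw [norm1, Finset.mul_sum]
          exact Finset.sum_congr rfl fun i _ => by ring
      _ ≤ δ := hx
  constructor
  · ext ⟨g, δ⟩
    simp only [Set.mem_setOf_eq]
    constructor
    · intro h
      exact key_claim A lam hlam g δ h
    · rintro ⟨x, rfl, hx⟩ u hu
      exact easy x δ hx u hu
  · intro g δ h
    exact key_claim A lam hlam g δ h
end

section
/- Ball safeness: let u* ∈ Δ be the maximizer of D over Δ. Then for every u ∈ Δ, u* belongs to the closed Euclidean ball of center c = (1/2)(y + u) and radius r = (1/2)‖y − u‖₂, i.e., ‖u* − (1/2)(y + u)‖₂ ≤ (1/2)‖y − u‖₂. -/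
lemma norm2_nonneg {m : ℕ} (v : Fin m → ℝ) : 0 ≤ norm2 v := Real.sqrt_nonneg _

lemma norm2_eq_norm {m : ℕ} (v : Fin m → ℝ) : norm2 v = ‖WithLp.toLp 2 v‖ := by
  simp [norm2, EuclideanSpace.norm_eq]

lemma Dobj_le_Dobj_iff {m : ℕ} {y u v : Fin m → ℝ} :
    Dobj y u ≤ Dobj y v ↔ norm2 (y - v) ≤ norm2 (y - u) := by
  rw [← sq_le_sq₀ (norm2_nonneg _) (norm2_nonneg _), Dobj, Dobj]
  constructor <;> intro h <;> linarith

lemma convex_setOf_feas {m n : ℕ} (A : Matrix (Fin m) (Fin n) ℝ) (lam : ℝ) :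
    Convex ℝ {u | feas A lam u} := by
  intro u hu v hv a b ha hb hab i
  have hdot : dot (fun j => A j i) (a • u + b • v)
      = a * dot (fun j => A j i) u + b * dot (fun j => A j i) v := by
    simp only [dot, Pi.add_apply, Pi.smul_apply, smul_eq_mul, Finset.mul_sum,
      ← Finset.sum_add_distrib]
    exact Finset.sum_congr rfl fun j _ => by ring
  calc |dot (fun j => A j i) (a • u + b • v)|
      ≤ a * |dot (fun j => A j i) u| + b * |dot (fun j => A j i) v| := by
        rw [hdot]
        refine (abs_add_le _ _).trans_eq ?_
        rw [abs_mul, abs_mul, abs_of_nonneg ha, abs_of_nonneg hb]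
    _ ≤ a * lam + b * lam := by gcongr <;> [exact hu i; exact hv i]
    _ = lam := by rw [← add_mul, hab, one_mul]

section InnerProductSpace

open scoped InnerProductSpace

variable {F : Type*} [NormedAddCommGroup F] [InnerProductSpace ℝ F]

lemma real_inner_sub_sub_nonpos_of_forall_norm_sub_le {K : Set F} (hK : Convex ℝ K) {u v : F}
    (hv : v ∈ K) (hmin : ∀ w ∈ K, ‖u - v‖ ≤ ‖u - w‖) : ∀ w ∈ K, ⟪u - v, w - v⟫_ℝ ≤ 0 := by
  have : Nonempty K := ⟨⟨v, hv⟩⟩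
  refine (norm_eq_iInf_iff_real_inner_le_zero hK hv).1 (le_antisymm ?_ ?_)
  · exact le_ciInf fun w => hmin w w.2
  · exact ciInf_le ⟨0, fun _ ⟨_, h⟩ => h ▸ norm_nonneg _⟩ (⟨v, hv⟩ : K)

lemma norm_add_le_norm_sub_of_real_inner_nonpos {a b : F} (h : ⟪a, b⟫_ℝ ≤ 0) :
    ‖a + b‖ ≤ ‖a - b‖ := by
  rw [← sq_le_sq₀ (norm_nonneg _) (norm_nonneg _), norm_add_sq_real, norm_sub_sq_real]
  linarith

lemma norm_sub_midpoint_le_of_real_inner_nonpos {x y v : F} (h : ⟪x - v, y - v⟫_ℝ ≤ 0) :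
    ‖v - (1 / 2 : ℝ) • (x + y)‖ ≤ 1 / 2 * ‖x - y‖ := by
  calc ‖v - (1 / 2 : ℝ) • (x + y)‖ = ‖(1 / 2 : ℝ) • ((x - v) + (y - v))‖ := by
        rw [← norm_neg]; congr 1; module
    _ = 1 / 2 * ‖(x - v) + (y - v)‖ := by rw [norm_smul]; norm_num
    _ ≤ 1 / 2 * ‖(x - v) - (y - v)‖ := by
        gcongr; exact norm_add_le_norm_sub_of_real_inner_nonpos h
    _ = 1 / 2 * ‖x - y‖ := by rw [sub_sub_sub_cancel_right]

end InnerProductSpace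

theorem lasso_ball_safe_general (m n : ℕ)
    (A : Matrix (Fin m) (Fin n) ℝ) (y : Fin m → ℝ) (lam : ℝ)
    (ustar : Fin m → ℝ) (hfeas : feas A lam ustar)
    (hmax : ∀ u : Fin m → ℝ, feas A lam u → Dobj y u ≤ Dobj y ustar) :
    ∀ u : Fin m → ℝ, feas A lam u →
      norm2 (ustar - (fun i => (y i + u i) / 2)) ≤ (1 / 2) * norm2 (y - u) := by
  intro u hu
  let K : Set (EuclideanSpace ℝ (Fin m)) := WithLp.ofLp ⁻¹' {v | feas A lam v}
  have hK : Convex ℝ K :=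
    (convex_setOf_feas A lam).linear_preimage (WithLp.linearEquiv 2 ℝ (Fin m → ℝ)).toLinearMap
  have hproj : ∀ w ∈ K, ‖WithLp.toLp 2 y - WithLp.toLp 2 ustar‖ ≤ ‖WithLp.toLp 2 y - w‖ :=
    fun w hw => by
      simpa only [norm2_eq_norm, WithLp.toLp_sub] using Dobj_le_Dobj_iff.1 (hmax w.ofLp hw)
  have hball := norm_sub_midpoint_le_of_real_inner_nonpos
    (real_inner_sub_sub_nonpos_of_forall_norm_sub_le hK hfeas hproj (WithLp.toLp 2 u) hu)
  have hcenter : (fun i => (y i + u i) / 2) = (1 / 2 : ℝ) • (y + u) := by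
    funext i; simp only [Pi.smul_apply, Pi.add_apply, smul_eq_mul]; ring
  simpa only [hcenter, norm2_eq_norm, WithLp.toLp_sub, WithLp.toLp_add, WithLp.toLp_smul]
    using hball

/-- ball safeness: the dual maximizer u* belongs to the ball of center
c = (1/2)(y + u) and radius r = (1/2)‖y − u‖₂ for every dual feasible u. -/
theorem lasso_ball_safe (m n : ℕ) (hm : 0 < m) (hn : 0 < n)
    (A : Matrix (Fin m) (Fin n) ℝ) (y : Fin m → ℝ) (lam : ℝ) (hlam : 0 < lam)
    (ustar : Fin m → ℝ) (hfeas : feas A lam ustar)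
    (hmax : ∀ u : Fin m → ℝ, feas A lam u → Dobj y u ≤ Dobj y ustar) :
    ∀ u : Fin m → ℝ, feas A lam u →
      norm2 (ustar - (fun i => (y i + u i) / 2)) ≤ (1 / 2) * norm2 (y - u) :=
  lasso_ball_safe_general m n A y lam ustar hfeas hmax
end

section
/- Safeness of the Hölder dome (Theorem 1): let u* ∈ Δ be the maximizer of D over Δ. Then for every x ∈ ℝ^n and every u ∈ Δ, u* belongs to the Hölder dome D_new(x,u) = {u' ∈ ℝ^m : ‖u' − (1/2)(y + u)‖₂ ≤ (1/2)‖y − u‖₂ and ⟨A x, u'⟩ ≤ λ‖x‖₁}. -/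
lemma norm2_sq_eq {m : ℕ} (v : Fin m → ℝ) : norm2 v ^ 2 = ∑ i, v i ^ 2 := by
  rw [norm2, Real.sq_sqrt (Finset.sum_nonneg fun i _ => sq_nonneg _)]

/-- Theorem 1: safeness of the Hölder dome: the dual maximizer u* belongs to
D_new(x,u) = B((y+u)/2, ‖y−u‖₂/2) ∩ {u' : ⟨A x, u'⟩ ≤ λ‖x‖₁}. -/
theorem holder_dome_safe (m n : ℕ) (hm : 0 < m) (hn : 0 < n)
    (A : Matrix (Fin m) (Fin n) ℝ) (y : Fin m → ℝ) (lam : ℝ) (hlam : 0 < lam)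
    (ustar : Fin m → ℝ) (hfeas : feas A lam ustar)
    (hmax : ∀ u : Fin m → ℝ, feas A lam u → Dobj y u ≤ Dobj y ustar) :
    ∀ (x : Fin n → ℝ) (u : Fin m → ℝ), feas A lam u →
      norm2 (ustar - (fun i => (y i + u i) / 2)) ≤ (1 / 2) * norm2 (y - u) ∧
      dot (A.mulVec x) ustar ≤ lam * norm1 x := by
  intro x u hu
  constructor
  · -- ball part
    set c : ℝ := ∑ i, (y i - ustar i) * (u i - ustar i) with hc
    set s : ℝ := ∑ i, (u i - ustar i) ^ 2 with hs
    have hsnn : (0:ℝ) ≤ s := Finset.sum_nonneg fun i _ => sq_nonneg _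
    have hkey : ∀ t : ℝ, 0 ≤ t → t ≤ 1 → 2 * t * c ≤ t ^ 2 * s := by
      intro t ht0 ht1
      set ut : Fin m → ℝ := fun i => ustar i + t * (u i - ustar i) with hut
      have hfu : feas A lam ut := by
        intro i
        have hsplit : dot (fun j => A j i) ut
            = (1 - t) * dot (fun j => A j i) ustar + t * dot (fun j => A j i) u := by
          simp only [dot, hut, Finset.mul_sum, ← Finset.sum_add_distrib]
          exact Finset.sum_congr rfl fun j _ => by ring
        rw [hsplit]
        calc |(1 - t) * dot (fun j => A j i) ustar + t * dot (fun j => A j i) u|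
            ≤ |(1 - t) * dot (fun j => A j i) ustar| + |t * dot (fun j => A j i) u| :=
              abs_add_le _ _
          _ = (1 - t) * |dot (fun j => A j i) ustar| + t * |dot (fun j => A j i) u| := by
              rw [abs_mul, abs_mul, abs_of_nonneg (by linarith), abs_of_nonneg ht0]
          _ ≤ (1 - t) * lam + t * lam := by
              have h1 : 0 ≤ 1 - t := by linarith
              have h2 := hfeas i
              have h3 := hu i
              have b1 : (1 - t) * |dot (fun j => A j i) ustar| ≤ (1 - t) * lam :=
                mul_le_mul_of_nonneg_left h2 h1
              have b2 : t * |dot (fun j => A j i) u| ≤ t * lam :=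
                mul_le_mul_of_nonneg_left h3 ht0
              linarith
          _ = lam := by ring
      have hD := hmax ut hfu
      have hS : ∑ i, (y i - ustar i) ^ 2 ≤ ∑ i, (y i - ut i) ^ 2 := by
        have e1 : norm2 (y - ustar) ^ 2 = ∑ i, (y i - ustar i) ^ 2 := by
          simpa using norm2_sq_eq (y - ustar)
        have e2 : norm2 (y - ut) ^ 2 = ∑ i, (y i - ut i) ^ 2 := by
          simpa using norm2_sq_eq (y - ut)
        simp only [Dobj] at hD
        linarith
      have hexp : ∑ i, (y i - ut i) ^ 2
          = (∑ i, (y i - ustar i) ^ 2) - 2 * t * c + t ^ 2 * s := by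
        simp only [hut, hc, hs, Finset.mul_sum, ← Finset.sum_sub_distrib,
          ← Finset.sum_add_distrib]
        exact Finset.sum_congr rfl fun i _ => by ring
      linarith
    have hcle : c ≤ 0 := by
      by_contra h
      push_neg at h
      rcases le_or_gt s c with hsc | hcs
      · have := hkey 1 zero_le_one le_rfl
        nlinarith
      · have hspos : 0 < s := lt_trans h hcs
        have ht := hkey (c / s) (by positivity) (le_of_lt ((div_lt_one hspos).2 hcs))
        have h1 : (c / s) ^ 2 * s = c ^ 2 / s := by field_simp
        have h2 : 2 * (c / s) * c = 2 * (c ^ 2 / s) := by field_simp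
        rw [h1, h2] at ht
        have : 0 < c ^ 2 / s := by positivity
        linarith
    -- now conclude
    have hsum : ∑ i, (ustar i - (y i + u i) / 2) ^ 2 ≤ (1/4) * ∑ i, (y i - u i) ^ 2 := by
      have hid : (∑ i, (ustar i - (y i + u i) / 2) ^ 2) - (1/4) * (∑ i, (y i - u i) ^ 2)
          = c := by
        simp only [hc, Finset.mul_sum, ← Finset.sum_sub_distrib]
        exact Finset.sum_congr rfl fun i _ => by ring
      linarith
    have h2 : norm2 (ustar - fun i => (y i + u i) / 2)
        ≤ Real.sqrt ((1/4) * ∑ i, (y i - u i) ^ 2) := by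
      rw [norm2]
      apply Real.sqrt_le_sqrt
      simpa using hsum
    calc norm2 (ustar - fun i => (y i + u i) / 2)
        ≤ Real.sqrt ((1/4) * ∑ i, (y i - u i) ^ 2) := h2
      _ = (1/2) * norm2 (y - u) := by
          rw [norm2, show ((1:ℝ)/4) = (1/2)^2 by norm_num,
            Real.sqrt_mul (by positivity), Real.sqrt_sq (by norm_num)]
          simp
  · -- Hölder part
    have hswap : dot (A.mulVec x) ustar = ∑ j, x j * dot (fun i => A i j) ustar := by
      simp only [dot, Matrix.mulVec, dotProduct, Finset.sum_mul, Finset.mul_sum]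
      rw [Finset.sum_comm]
      exact Finset.sum_congr rfl fun j _ => Finset.sum_congr rfl fun i _ => by ring
    rw [hswap, norm1, Finset.mul_sum]
    apply Finset.sum_le_sum
    intro j _
    calc x j * dot (fun i => A i j) ustar ≤ |x j * dot (fun i => A i j) ustar| := le_abs_self _
      _ = |x j| * |dot (fun i => A i j) ustar| := abs_mul _ _
      _ ≤ |x j| * lam := by gcongr; exact hfeas j
      _ = lam * |x j| := mul_comm _ _
end

section
/- Inclusion of the GAP dome in the GAP sphere (equation (9)): for every x ∈ ℝ^n and every u ∈ Δ, D_gap(x,u) ⊆ B(u, √(2·gap(x,u))). Explicitly, with c = (1/2)(y + u) and r = (1/2)‖y − u‖₂: every u' ∈ ℝ^m satisfying ‖u' − c‖₂ ≤ r and ⟨y − c, u' − c⟩ ≤ gap(x,u) − r² also satisfies ‖u' − u‖₂² ≤ 2·gap(x,u). -/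
/-! Since `c` is the midpoint of `y` and `u`, `u - c = -(y - c)` and `‖y - c‖ = r`, so for `v` in the
dome and `g` the gap, `‖v - u‖² = ‖v - c‖² + 2⟪y - c, v - c⟫ + ‖y - c‖² ≤ r² + 2(g - r²) + r² = 2g`. -/

open scoped RealInnerProductSpace

theorem sq_norm_sub_le_of_mem_dome {E : Type*} [NormedAddCommGroup E] [InnerProductSpace ℝ E]
    {y u v : E} {g : ℝ} (hball : ‖v - midpoint ℝ y u‖ ≤ ‖y - u‖ / 2)
    (hhalfspace : ⟪y - midpoint ℝ y u, v - midpoint ℝ y u⟫ ≤ g - (‖y - u‖ / 2) ^ 2) :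
    ‖v - u‖ ^ 2 ≤ 2 * g := by
  set c := midpoint ℝ y u
  have hyc : ‖y - c‖ = ‖y - u‖ / 2 := by
    rw [← dist_eq_norm, ← dist_eq_norm, dist_left_midpoint]
    norm_num [div_eq_inv_mul]
  have hvu : v - u = (v - c) + (y - c) := by
    have hcu : c - u = y - c := by rw [midpoint_sub_right, left_sub_midpoint]
    rw [← hcu]; abel
  have hball_sq : ‖v - c‖ ^ 2 ≤ (‖y - u‖ / 2) ^ 2 := pow_le_pow_left₀ (norm_nonneg _) hball 2
  calc ‖v - u‖ ^ 2 = ‖v - c‖ ^ 2 + 2 * ⟪y - c, v - c⟫ + ‖y - c‖ ^ 2 := by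
        rw [hvu, norm_add_sq_real, real_inner_comm]
    _ ≤ (‖y - u‖ / 2) ^ 2 + 2 * (g - (‖y - u‖ / 2) ^ 2) + (‖y - u‖ / 2) ^ 2 := by
        rw [hyc]; gcongr
    _ = 2 * g := by ring

theorem norm2_eq_norm_toLp {m : ℕ} (v : Fin m → ℝ) :
    norm2 v = ‖(WithLp.toLp 2 v : EuclideanSpace ℝ (Fin m))‖ := by
  simp [norm2, EuclideanSpace.norm_eq]

theorem dot_eq_inner_toLp {m : ℕ} (a b : Fin m → ℝ) :
    dot a b = ⟪(WithLp.toLp 2 a : EuclideanSpace ℝ (Fin m)), WithLp.toLp 2 b⟫ := by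
  simp [dot, PiLp.inner_apply, mul_comm]

theorem toLp_eq_midpoint {m : ℕ} (y u : Fin m → ℝ) :
    (WithLp.toLp 2 (fun i => (y i + u i) / 2) : EuclideanSpace ℝ (Fin m)) =
      midpoint ℝ (WithLp.toLp 2 y) (WithLp.toLp 2 u) := by
  ext i
  simp only [midpoint_eq_smul_add, invOf_eq_inv, smul_add, PiLp.add_apply, PiLp.smul_apply,
    smul_eq_mul]
  ring

theorem gap_dome_subset_gap_sphere_general (m n : ℕ)
    (A : Matrix (Fin m) (Fin n) ℝ) (y : Fin m → ℝ) (lam : ℝ)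
    (x : Fin n → ℝ) (u : Fin m → ℝ)
    (c : Fin m → ℝ) (hc : c = fun i => (y i + u i) / 2)
    (r : ℝ) (hr : r = (1 / 2) * norm2 (y - u)) :
    ∀ u' : Fin m → ℝ, norm2 (u' - c) ≤ r →
      dot (y - c) (u' - c) ≤ (Pobj A y lam x - Dobj y u) - r ^ 2 →
      norm2 (u' - u) ^ 2 ≤ 2 * (Pobj A y lam x - Dobj y u) := by
  intro u' hball hhalfspace
  have hr' : r = ‖(WithLp.toLp 2 (y - u) : EuclideanSpace ℝ (Fin m))‖ / 2 := by
    rw [hr, norm2_eq_norm_toLp]; ring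
  subst hc hr'
  simp only [norm2_eq_norm_toLp, dot_eq_inner_toLp, WithLp.toLp_sub, toLp_eq_midpoint] at *
  exact sq_norm_sub_le_of_mem_dome hball hhalfspace

/-- equation (9): inclusion of the GAP dome in the GAP sphere:
with c = (1/2)(y + u) and r = (1/2)‖y − u‖₂, any u' with ‖u' − c‖₂ ≤ r and
⟨y − c, u' − c⟩ ≤ gap(x,u) − r² satisfies ‖u' − u‖₂² ≤ 2·gap(x,u). -/
theorem gap_dome_subset_gap_sphere (m n : ℕ) (hm : 0 < m) (hn : 0 < n)
    (A : Matrix (Fin m) (Fin n) ℝ) (y : Fin m → ℝ) (lam : ℝ) (hlam : 0 < lam)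
    (x : Fin n → ℝ) (u : Fin m → ℝ) (hu : feas A lam u)
    (c : Fin m → ℝ) (hc : c = fun i => (y i + u i) / 2)
    (r : ℝ) (hr : r = (1 / 2) * norm2 (y - u)) :
    ∀ u' : Fin m → ℝ, norm2 (u' - c) ≤ r →
      dot (y - c) (u' - c) ≤ (Pobj A y lam x - Dobj y u) - r ^ 2 →
      norm2 (u' - u) ^ 2 ≤ 2 * (Pobj A y lam x - Dobj y u) :=
  gap_dome_subset_gap_sphere_general m n A y lam x u c hc r hr
end
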